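/- arXiv:1209.4405 — 2 statements merged into one kernel-verified Lean document; each statement's English description precedes it below -/
import Mathlib

section
/- Let n ≥ 1 and let L0 = UΣVᵀ be a rank-r matrix with reduced SVD, T the associated tangent subspace, S0 a matrix with support subspace Ω, M = L0 + S0, Q a linear subspace of ℝ^{n×n}, Γ = Q ∩ T^⊥, and 0 < λ < 1. Assume dim(Q^⊥ ⊕ T ⊕ Ω) = dim(Q^⊥) + dim(T) + dim(Ω) (so Γ^⊥ = Q^⊥ ⊕ T) and ‖P_Ω P_{Γ^⊥}‖ < 1/2. If there exist matrices W, F, D ∈ ℝ^{n×n} such that UVᵀ + W = λ(sgn(S0) + F + P_Ω D), this matrix lies in Q, and P_T W = 0, ‖W‖ < 1/2, P_Ω F = 0, ‖F‖_∞ < 1/2, and ‖P_Ω D‖_F ≤ 1/4, then (L0, S0) is the unique minimizer of ‖L‖_* + λ‖S‖_1 subject to P_Q M = P_Q(L + S). -/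
open scoped BigOperators Matrix

abbrev Mat (n : ℕ) := Matrix (Fin n) (Fin n) ℝ

/-- Trace (Frobenius) inner product `⟨X, Y⟩ = trace (Xᵀ Y)`. -/
def finner {n : ℕ} (X Y : Mat n) : ℝ := ∑ i, ∑ j, X i j * Y i j

/-- Frobenius norm. -/
noncomputable def fnorm {n : ℕ} (X : Mat n) : ℝ := Real.sqrt (finner X X)

/-- Entrywise ℓ¹ norm. -/
def l1Norm {n : ℕ} (X : Mat n) : ℝ := ∑ i, ∑ j, |X i j|

/-- Entrywise ℓ∞ norm. -/
noncomputable def linfNorm {n : ℕ} (X : Mat n) : ℝ := ⨆ p : Fin n × Fin n, |X p.1 p.2|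

/-- Spectral (ℓ² operator) norm. -/
noncomputable def specNorm {n : ℕ} (X : Mat n) : ℝ := ‖Matrix.toEuclideanCLM (𝕜 := ℝ) X‖

/-- Nuclear norm: the sum of the singular values, i.e. of the square roots of the
eigenvalues of `Xᵀ * X`. -/
noncomputable def nucNorm {n : ℕ} (X : Mat n) : ℝ :=
  ∑ i, Real.sqrt ((Matrix.isHermitian_conjTranspose_mul_self X).eigenvalues i)

/-- Operator norm of a linear map on matrix space, w.r.t. the Frobenius norm:
`sup {‖A X‖_F : ‖X‖_F = 1}`. -/
noncomputable def opNorm {n : ℕ} (A : Mat n →ₗ[ℝ] Mat n) : ℝ :=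
  sSup {c : ℝ | ∃ X : Mat n, fnorm X = 1 ∧ c = fnorm (A X)}

/-- `P` is the orthogonal projection onto the subspace `V` (w.r.t. the trace inner product). -/
def IsOrthProj {n : ℕ} (V : Submodule ℝ (Mat n)) (P : Mat n →ₗ[ℝ] Mat n) : Prop :=
  (∀ X, P X ∈ V) ∧ (∀ X ∈ V, P X = X) ∧ (∀ X, ∀ Y ∈ V, finner (X - P X) Y = 0)

/-- Orthogonal complement of a subspace of matrix space w.r.t. the trace inner product. -/
def orthComp {n : ℕ} (V : Submodule ℝ (Mat n)) : Submodule ℝ (Mat n) where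
  carrier := {X | ∀ Y ∈ V, finner X Y = 0}
  zero_mem' := by intro Y hY; simp [finner]
  add_mem' := by
    intro a b ha hb Y hY
    have h1 := ha Y hY
    have h2 := hb Y hY
    simp only [finner, Matrix.add_apply, add_mul, Finset.sum_add_distrib] at *
    rw [h1, h2]; ring
  smul_mem' := by
    intro c a ha Y hY
    have h1 := ha Y hY
    simp only [finner, Matrix.smul_apply, smul_eq_mul, mul_assoc, ← Finset.mul_sum] at *
    rw [h1]; ring

/-- The tangent space `T = {U Xᵀ + Y Vᵀ}` associated with the reduced SVD `L₀ = U Σ Vᵀ`. -/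
def tangentT {n r : ℕ} (U V : Matrix (Fin n) (Fin r) ℝ) : Submodule ℝ (Mat n) where
  carrier := {A | ∃ X Y : Matrix (Fin n) (Fin r) ℝ, A = U * Xᵀ + Y * Vᵀ}
  zero_mem' := ⟨0, 0, by simp⟩
  add_mem' := by
    rintro a b ⟨X1, Y1, rfl⟩ ⟨X2, Y2, rfl⟩
    exact ⟨X1 + X2, Y1 + Y2, by rw [Matrix.transpose_add, Matrix.mul_add, Matrix.add_mul]; abel⟩
  smul_mem' := by
    rintro c a ⟨X1, Y1, rfl⟩
    exact ⟨c • X1, c • Y1,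
      by rw [Matrix.transpose_smul, Matrix.mul_smul, Matrix.smul_mul, smul_add]⟩

/-- The support subspace `Ω` of `S₀`: matrices vanishing wherever `S₀` vanishes. -/
def suppSub {n : ℕ} (S0 : Mat n) : Submodule ℝ (Mat n) where
  carrier := {X | ∀ i j, S0 i j = 0 → X i j = 0}
  zero_mem' := by intro i j _; rfl
  add_mem' := by
    intro a b ha hb i j h
    simp [Matrix.add_apply, ha i j h, hb i j h]
  smul_mem' := by
    intro c a ha i j h
    simp [Matrix.smul_apply, ha i j h]

/-- Entrywise sign matrix. -/
noncomputable def sgnMat {n : ℕ} (S : Mat n) : Mat n := Matrix.of fun i j => Real.sign (S i j)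

/-!
Write `L = L₀ + H_L` and `S = S₀ + H_S`; feasibility says `H_L + H_S ⊥ Q`. The nuclear-norm
subgradient `UVᵀ + W₀`, where `W₀ ∈ T^⊥` is the polar factor of `P_{T^⊥} H_L`, and the ℓ¹
subgradient `sgn S₀ + sgn (P_{Ω^⊥} H_S)` show that the objective grows by at least
`⟨H_L, UVᵀ⟩ + λ⟨H_S, sgn S₀⟩ + ‖P_{T^⊥} H_L‖_* + λ‖P_{Ω^⊥} H_S‖₁`. Since the certificate
`UVᵀ + W = λ (sgn S₀ + F + P_Ω D)` lies in `Q`, the first two terms equal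
`-⟨H_L, W⟩ - λ⟨H_S, F⟩ - λ⟨H_S, P_Ω D⟩`, and the bounds on `W`, `F`, `D` control these by
`‖P_{T^⊥} H_L‖_*`, `‖P_{Ω^⊥} H_S‖₁` and `‖P_Ω H_S‖_F`. The last is handled by
`‖P_Ω P_{Γ^⊥}‖ ≤ 1/2`, because `H_S + P_{T^⊥} H_L = (H_L + H_S) - P_T H_L ∈ Γ^⊥`. Altogether the
objective grows by at least `(1-λ)/2 ‖P_{T^⊥} H_L‖_* + λ/4 ‖P_{Ω^⊥} H_S‖₁`, so at equality
`H_L ∈ T` and `H_S ∈ Ω`, and the independence of `Q^⊥`, `T`, `Ω` forces `H_L = H_S = 0`.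
-/

open scoped RealInnerProductSpace

section Frobenius

variable {n : ℕ}

noncomputable def Mat.toEuclidean (n : ℕ) : Mat n ≃ₗ[ℝ] EuclideanSpace ℝ (Fin n × Fin n) where
  toFun X := WithLp.toLp 2 fun p => X p.1 p.2
  invFun x := Matrix.of fun i j => x (i, j)
  map_add' _ _ := rfl
  map_smul' _ _ := rfl
  left_inv _ := rfl
  right_inv _ := rfl

@[simp] lemma Mat.toEuclidean_apply (X : Mat n) (p : Fin n × Fin n) :
    Mat.toEuclidean n X p = X p.1 p.2 := rfl

lemma finner_eq_inner (X Y : Mat n) : finner X Y = ⟪Mat.toEuclidean n X, Mat.toEuclidean n Y⟫ := by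
  simp [finner, PiLp.inner_apply, Fintype.sum_prod_type, mul_comm]

lemma fnorm_eq_norm (X : Mat n) : fnorm X = ‖Mat.toEuclidean n X‖ := by
  rw [fnorm, finner_eq_inner, norm_eq_sqrt_real_inner]

lemma finner_comm (X Y : Mat n) : finner X Y = finner Y X := by
  simp only [finner_eq_inner, real_inner_comm]

lemma finner_add_left (X Y Z : Mat n) : finner (X + Y) Z = finner X Z + finner Y Z := by
  simp only [finner_eq_inner, map_add, inner_add_left]

lemma finner_add_right (X Y Z : Mat n) : finner X (Y + Z) = finner X Y + finner X Z := by
  simp only [finner_eq_inner, map_add, inner_add_right]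

lemma finner_sub_left (X Y Z : Mat n) : finner (X - Y) Z = finner X Z - finner Y Z := by
  simp only [finner_eq_inner, map_sub, inner_sub_left]

lemma finner_smul_right (c : ℝ) (X Y : Mat n) : finner X (c • Y) = c * finner X Y := by
  simp only [finner_eq_inner, map_smul, real_inner_smul_right]

lemma finner_zero_right (X : Mat n) : finner X 0 = 0 := by simp [finner]

lemma finner_le_fnorm_mul_fnorm (X Y : Mat n) : finner X Y ≤ fnorm X * fnorm Y := by
  simpa only [finner_eq_inner, fnorm_eq_norm] using real_inner_le_norm _ _

lemma fnorm_nonneg (X : Mat n) : 0 ≤ fnorm X := Real.sqrt_nonneg _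

lemma fnorm_add_le (X Y : Mat n) : fnorm (X + Y) ≤ fnorm X + fnorm Y := by
  simpa only [fnorm_eq_norm, map_add] using norm_add_le _ _

lemma fnorm_sub_le (X Y : Mat n) : fnorm (X - Y) ≤ fnorm X + fnorm Y := by
  simpa only [fnorm_eq_norm, map_sub] using norm_sub_le _ _

lemma fnorm_smul (c : ℝ) (X : Mat n) : fnorm (c • X) = |c| * fnorm X := by
  simp only [fnorm_eq_norm, map_smul, norm_smul, Real.norm_eq_abs]

lemma fnorm_eq_zero {X : Mat n} : fnorm X = 0 ↔ X = 0 := by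
  simp only [fnorm_eq_norm, norm_eq_zero, map_eq_zero_iff _ (Mat.toEuclidean n).injective]

lemma finner_eq_trace (X Y : Mat n) : finner X Y = (Xᵀ * Y).trace := by
  simp only [finner, Matrix.trace, Matrix.diag_apply, Matrix.mul_apply, Matrix.transpose_apply]
  rw [Finset.sum_comm]

end Frobenius

namespace IsOrthProj

variable {n : ℕ} {V : Submodule ℝ (Mat n)} {P : Mat n →ₗ[ℝ] Mat n}

lemma finner_apply_left (hP : IsOrthProj V P) (X Y : Mat n) :
    finner (P X) Y = finner (P X) (P Y) := by
  have h := hP.2.2 Y (P X) (hP.1 X)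
  rw [finner_sub_left, finner_comm Y, finner_comm (P Y)] at h
  linarith

lemma finner_apply_comm (hP : IsOrthProj V P) (X Y : Mat n) :
    finner (P X) Y = finner X (P Y) := by
  rw [hP.finner_apply_left, finner_comm, ← hP.finner_apply_left, finner_comm]

lemma fnorm_mul_self_add (hP : IsOrthProj V P) (X : Mat n) :
    fnorm (P X) * fnorm (P X) + fnorm (X - P X) * fnorm (X - P X) = fnorm X * fnorm X := by
  have h : finner (P X) (X - P X) = 0 := by rw [finner_comm]; exact hP.2.2 X _ (hP.1 X)
  rw [finner_eq_inner] at h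
  simpa only [fnorm_eq_norm, map_sub, add_sub_cancel] using
    (norm_add_sq_eq_norm_sq_add_norm_sq_real h).symm

lemma fnorm_apply_le (hP : IsOrthProj V P) (X : Mat n) : fnorm (P X) ≤ fnorm X := by
  rw [mul_self_le_mul_self_iff (fnorm_nonneg _) (fnorm_nonneg _), ← hP.fnorm_mul_self_add X]
  nlinarith

lemma fnorm_sub_apply_le (hP : IsOrthProj V P) (X : Mat n) : fnorm (X - P X) ≤ fnorm X := by
  rw [mul_self_le_mul_self_iff (fnorm_nonneg _) (fnorm_nonneg _), ← hP.fnorm_mul_self_add X]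
  nlinarith

lemma mem_orthComp_of_apply_eq_zero (hP : IsOrthProj V P) {X : Mat n} (hX : P X = 0) :
    X ∈ orthComp V := fun Y hY => by simpa [hX] using hP.2.2 X Y hY

lemma mem_of_sub_apply_eq_zero (hP : IsOrthProj V P) {X : Mat n} (hX : X - P X = 0) : X ∈ V :=
  sub_eq_zero.mp hX ▸ hP.1 X

lemma unique {P' : Mat n →ₗ[ℝ] Mat n} (hP : IsOrthProj V P) (hP' : IsOrthProj V P') :
    P = P' := by
  ext1 X
  have hmem : P X - P' X ∈ V := V.sub_mem (hP.1 X) (hP'.1 X)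
  have h : finner (P X - P' X) (P X - P' X) = 0 := by
    have h1 := hP.2.2 X _ hmem
    have h2 := hP'.2.2 X _ hmem
    rw [finner_sub_left] at h1 h2 ⊢
    linarith
  rw [← sub_eq_zero, ← fnorm_eq_zero, fnorm, h, Real.sqrt_zero]

end IsOrthProj

section SpectralNorm

variable {n : ℕ}

lemma specNorm_nonneg (X : Mat n) : 0 ≤ specNorm X := norm_nonneg _

lemma norm_toLp (u : Fin n → ℝ) : ‖WithLp.toLp 2 u‖ = √(u ⬝ᵥ u) := by
  simp [EuclideanSpace.norm_eq, dotProduct, sq]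

lemma dotProduct_mulVec_le (Z : Mat n) (u v : Fin n → ℝ) :
    u ⬝ᵥ Z *ᵥ v ≤ specNorm Z * (√(u ⬝ᵥ u) * √(v ⬝ᵥ v)) := by
  rw [← norm_toLp, ← norm_toLp, ← mul_assoc, mul_comm (specNorm Z)]
  calc u ⬝ᵥ Z *ᵥ v = ⟪WithLp.toLp 2 u, Matrix.toEuclideanCLM (𝕜 := ℝ) Z (WithLp.toLp 2 v)⟫ :=
        (Matrix.inner_toEuclideanCLM _ _ _).symm
    _ ≤ ‖WithLp.toLp 2 u‖ * ‖Matrix.toEuclideanCLM (𝕜 := ℝ) Z (WithLp.toLp 2 v)‖ :=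
        real_inner_le_norm _ _
    _ ≤ ‖WithLp.toLp 2 u‖ * specNorm Z * ‖WithLp.toLp 2 v‖ := by
        rw [mul_assoc]
        exact mul_le_mul_of_nonneg_left ((Matrix.toEuclideanCLM (𝕜 := ℝ) Z).le_opNorm _)
          (norm_nonneg _)

open scoped Matrix.Norms.L2Operator in
lemma specNorm_transpose_mul_self (X : Mat n) :
    specNorm (Xᵀ * X) = specNorm X * specNorm X := by
  have h := Matrix.l2_opNorm_conjTranspose_mul_self X
  rw [Matrix.conjTranspose_eq_transpose_of_trivial] at h
  exact h

lemma specNorm_le_one_of_idempotent {X : Mat n} (h : (Xᵀ * X) * (Xᵀ * X) = Xᵀ * X) :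
    specNorm X ≤ 1 := by
  have hsq := specNorm_transpose_mul_self (Xᵀ * X)
  rw [Matrix.transpose_mul, Matrix.transpose_transpose, h, specNorm_transpose_mul_self] at hsq
  nlinarith [specNorm_nonneg X, mul_self_nonneg (specNorm X - 1)]

end SpectralNorm

section NuclearNorm

variable {n : ℕ}

open Matrix

lemma exists_transpose_mul_self_eq_conj_diagonal (X : Mat n) : ∃ (P : Mat n) (σ : Fin n → ℝ),
    Pᵀ * P = 1 ∧ P * Pᵀ = 1 ∧ (∀ i, 0 ≤ σ i) ∧ nucNorm X = ∑ i, σ i ∧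
      Xᵀ * X = P * diagonal (fun i => σ i ^ 2) * Pᵀ := by
  set hX := isHermitian_conjTranspose_mul_self X
  set P : Mat n := (hX.eigenvectorUnitary : Mat n)
  have hstar : star P = Pᵀ := by rw [star_eq_conjTranspose, conjTranspose_eq_transpose_of_trivial]
  refine ⟨P, fun i => √(hX.eigenvalues i), ?_, ?_, fun i => Real.sqrt_nonneg _, rfl, ?_⟩
  · rw [← hstar]; exact Unitary.coe_star_mul_self _
  · rw [← hstar]; exact Unitary.coe_mul_star_self _
  · have he : ∀ i, √(hX.eigenvalues i) ^ 2 = hX.eigenvalues i := fun i =>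
      Real.sq_sqrt ((posSemidef_conjTranspose_mul_self X).eigenvalues_nonneg i)
    simp only [he]
    rw [← conjTranspose_eq_transpose_of_trivial X, ← hstar]
    exact hX.spectral_theorem

lemma trace_mul_diagonal_mul_transpose {P : Mat n} (hP : Pᵀ * P = 1) (a : Fin n → ℝ) :
    (P * diagonal a * Pᵀ).trace = ∑ i, a i := by
  rw [trace_mul_comm, ← Matrix.mul_assoc, hP, Matrix.one_mul, trace_diagonal]

lemma mul_diagonal_mul_transpose_mul {P : Mat n} (hP : Pᵀ * P = 1) (a b : Fin n → ℝ) :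
    P * diagonal a * Pᵀ * (P * diagonal b * Pᵀ) = P * diagonal (a * b) * Pᵀ := by
  simp only [Matrix.mul_assoc]
  rw [← Matrix.mul_assoc Pᵀ P, hP, Matrix.one_mul, ← Matrix.mul_assoc (diagonal a),
    diagonal_mul_diagonal]
  rfl

lemma nucNorm_nonneg (X : Mat n) : 0 ≤ nucNorm X :=
  Finset.sum_nonneg fun _ _ => Real.sqrt_nonneg _

lemma fnorm_le_nucNorm (X : Mat n) : fnorm X ≤ nucNorm X := by
  obtain ⟨P, σ, hP, -, hσ, hnuc, hXX⟩ := exists_transpose_mul_self_eq_conj_diagonal X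
  rw [fnorm, finner_eq_trace, hXX, trace_mul_diagonal_mul_transpose hP, hnuc]
  exact Real.sqrt_le_iff.mpr ⟨Finset.sum_nonneg fun i _ => hσ i,
    Finset.sum_sq_le_sq_sum_of_nonneg fun i _ => hσ i⟩

lemma eq_zero_of_nucNorm_eq_zero {X : Mat n} (h : nucNorm X = 0) : X = 0 :=
  fnorm_eq_zero.mp (le_antisymm (h ▸ fnorm_le_nucNorm X) (fnorm_nonneg X))

lemma finner_le_nucNorm_mul_specNorm (X Z : Mat n) :
    finner X Z ≤ nucNorm X * specNorm Z := by
  obtain ⟨P, σ, hP, hP', hσ, hnuc, hXX⟩ := exists_transpose_mul_self_eq_conj_diagonal X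
  have hY : (X * P)ᵀ * (X * P) = diagonal fun i => σ i ^ 2 := by
    rw [transpose_mul, Matrix.mul_assoc, ← Matrix.mul_assoc Xᵀ, hXX]
    simp only [Matrix.mul_assoc]
    rw [hP, Matrix.mul_one, ← Matrix.mul_assoc, hP, Matrix.one_mul]
  have hcol : ∀ (A : Mat n) i, (Aᵀ * A) i i = Aᵀ i ⬝ᵥ Aᵀ i := fun A i => rfl
  calc finner X Z = (Xᵀ * Z * P * Pᵀ).trace := by
        rw [Matrix.mul_assoc _ P, hP', Matrix.mul_one, finner_eq_trace]
    _ = ((X * P)ᵀ * (Z * P)).trace := by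
        rw [trace_mul_comm, transpose_mul]
        simp only [Matrix.mul_assoc]
    _ = ∑ i, (X * P)ᵀ i ⬝ᵥ Z *ᵥ Pᵀ i := by
        refine Finset.sum_congr rfl fun i _ => ?_
        simp [Matrix.mul_apply, dotProduct, mulVec, mul_comm]
    _ ≤ ∑ i, σ i * specNorm Z := by
        refine Finset.sum_le_sum fun i _ => (dotProduct_mulVec_le _ _ _).trans_eq ?_
        rw [← hcol, ← hcol, hY, hP, diagonal_apply_eq, one_apply_eq, Real.sqrt_one,
          Real.sqrt_sq (hσ i)]
        ring
    _ = nucNorm X * specNorm Z := by rw [← Finset.sum_mul, hnuc]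

lemma transpose_mul_diagonal_mul_transpose (P : Mat n) (a : Fin n → ℝ) :
    (P * diagonal a * Pᵀ)ᵀ = P * diagonal a * Pᵀ := by
  rw [transpose_mul, transpose_mul, transpose_transpose, diagonal_transpose, Matrix.mul_assoc]

-- `W = X P diag(σ⁻¹) Pᵀ` is the polar factor of `X` (using `0⁻¹ = 0` on the kernel); the form
-- `X * K * X` records that the row and column spaces of `W` lie in those of `X`.
lemma exists_dual_certificate (X : Mat n) : ∃ W : Mat n,
    finner X W = nucNorm X ∧ (Wᵀ * W) * (Wᵀ * W) = Wᵀ * W ∧ ∃ K : Mat n, W = X * K * X := by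
  obtain ⟨P, σ, hP, -, -, hnuc, hXX⟩ := exists_transpose_mul_self_eq_conj_diagonal X
  have hpt : ∀ a : ℝ, a ^ 2 * a⁻¹ = a ∧ a⁻¹ ^ 3 * a ^ 2 = a⁻¹ ∧
      (a⁻¹ * a) * (a⁻¹ * a) = a⁻¹ * a := by
    intro a
    rcases eq_or_ne a 0 with rfl | ha
    · simp
    · refine ⟨?_, ?_, ?_⟩ <;> field_simp
  have hW : Xᵀ * (X * (P * diagonal σ⁻¹ * Pᵀ)) = P * diagonal σ * Pᵀ := by
    rw [← Matrix.mul_assoc, hXX, mul_diagonal_mul_transpose_mul hP]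
    congr 3; funext i; exact (hpt (σ i)).1
  refine ⟨X * (P * diagonal σ⁻¹ * Pᵀ), ?_, ?_, P * diagonal (σ⁻¹ ^ 3) * Pᵀ * Xᵀ, ?_⟩
  · rw [finner_eq_trace, hW, trace_mul_diagonal_mul_transpose hP, hnuc]
  · rw [transpose_mul, transpose_mul_diagonal_mul_transpose, Matrix.mul_assoc _ Xᵀ, hW,
      mul_diagonal_mul_transpose_mul hP, mul_diagonal_mul_transpose_mul hP]
    congr 3; funext i; exact (hpt (σ i)).2.2
  · rw [Matrix.mul_assoc X, Matrix.mul_assoc _ Xᵀ, hXX, mul_diagonal_mul_transpose_mul hP]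
    congr 4; funext i; exact (hpt (σ i)).2.1.symm

end NuclearNorm

section LowRank

variable {n r : ℕ} {U V : Matrix (Fin n) (Fin r) ℝ}

open Matrix

lemma eq_zero_of_trace_transpose_mul_self {m k : ℕ} {A : Matrix (Fin m) (Fin k) ℝ}
    (h : (Aᵀ * A).trace = 0) : A = 0 := by
  rwa [← conjTranspose_eq_transpose_of_trivial, trace_conjTranspose_mul_self_eq_zero_iff] at h

lemma mul_diagonal_mul_transpose_mem_tangentT (d : Fin r → ℝ) :
    U * diagonal d * Vᵀ ∈ tangentT U V :=
  ⟨0, U * diagonal d, by simp⟩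

lemma mem_orthComp_tangentT_iff {Z : Mat n} :
    Z ∈ orthComp (tangentT U V) ↔ Uᵀ * Z = 0 ∧ Z * V = 0 := by
  constructor
  · intro hZ
    constructor
    · apply eq_zero_of_trace_transpose_mul_self
      rw [transpose_mul, transpose_transpose, Matrix.mul_assoc, ← finner_eq_trace]
      exact hZ _ ⟨(Uᵀ * Z)ᵀ, 0, by simp⟩
    · apply eq_zero_of_trace_transpose_mul_self
      rw [transpose_mul, Matrix.mul_assoc, trace_mul_comm]
      simp only [Matrix.mul_assoc]
      rw [← Matrix.mul_assoc Z, ← finner_eq_trace]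
      exact hZ _ ⟨0, Z * V, by simp⟩
  · rintro ⟨hUZ, hZV⟩ _ ⟨X, Y, rfl⟩
    have h1 : Zᵀ * U = 0 := by rw [← transpose_transpose U, ← transpose_mul, hUZ, transpose_zero]
    have h2 : Vᵀ * Zᵀ = 0 := by rw [← transpose_mul, hZV, transpose_zero]
    rw [finner_eq_trace, Matrix.mul_add, ← Matrix.mul_assoc, h1, Matrix.zero_mul, zero_add,
      trace_mul_comm, Matrix.mul_assoc, h2, Matrix.mul_zero, trace_zero]

lemma specNorm_mul_transpose_add_le_one (hU : Uᵀ * U = 1) (hV : Vᵀ * V = 1) {W : Mat n}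
    (hUW : Uᵀ * W = 0) (hWV : W * V = 0) (hW : (Wᵀ * W) * (Wᵀ * W) = Wᵀ * W) :
    specNorm (U * Vᵀ + W) ≤ 1 := by
  have hWU : Wᵀ * U = 0 := by rw [← transpose_transpose U, ← transpose_mul, hUW, transpose_zero]
  have hVW : Vᵀ * Wᵀ = 0 := by rw [← transpose_mul, hWV, transpose_zero]
  have hG : (U * Vᵀ + W)ᵀ * (U * Vᵀ + W) = V * Vᵀ + Wᵀ * W := by
    rw [transpose_add, transpose_mul, transpose_transpose, Matrix.add_mul, Matrix.mul_add,
      Matrix.mul_add, Matrix.mul_assoc V, ← Matrix.mul_assoc Uᵀ, hU, Matrix.one_mul,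
      Matrix.mul_assoc V, hUW, Matrix.mul_zero, ← Matrix.mul_assoc, hWU, Matrix.zero_mul,
      add_zero, zero_add]
  apply specNorm_le_one_of_idempotent
  rw [hG, Matrix.add_mul, Matrix.mul_add, Matrix.mul_add, hW, Matrix.mul_assoc V,
    ← Matrix.mul_assoc Vᵀ, hV, Matrix.one_mul, Matrix.mul_assoc V, ← Matrix.mul_assoc Vᵀ, hVW,
    Matrix.zero_mul, Matrix.mul_zero, Matrix.mul_assoc Wᵀ, ← Matrix.mul_assoc W, hWV,
    Matrix.zero_mul, Matrix.mul_zero, add_zero, zero_add]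

lemma finner_mul_diagonal_mul_transpose (d : Fin r → ℝ) (Z : Mat n) :
    finner (U * diagonal d * Vᵀ) Z = ∑ k, d k * (Uᵀ * Z * V) k k := by
  have h : (U * diagonal d * Vᵀ)ᵀ * Z = V * (diagonal d * Uᵀ * Z) := by
    rw [transpose_mul, transpose_mul, transpose_transpose, diagonal_transpose]
    simp only [Matrix.mul_assoc]
  rw [finner_eq_trace, h, trace_mul_comm, Matrix.trace]
  simp only [diag_apply, Matrix.mul_assoc, diagonal_mul]

lemma transpose_mul_mul_apply_self_le (hU : Uᵀ * U = 1) (hV : Vᵀ * V = 1) (Z : Mat n)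
    (k : Fin r) : (Uᵀ * Z * V) k k ≤ specNorm Z := by
  have hcol : ∀ (A : Matrix (Fin n) (Fin r) ℝ), (Aᵀ * A) k k = Aᵀ k ⬝ᵥ Aᵀ k := fun A => rfl
  calc (Uᵀ * Z * V) k k = Uᵀ k ⬝ᵥ Z *ᵥ Vᵀ k := by
        rw [Matrix.mul_apply', dotProduct_mulVec]; rfl
    _ ≤ specNorm Z * (√(Uᵀ k ⬝ᵥ Uᵀ k) * √(Vᵀ k ⬝ᵥ Vᵀ k)) := dotProduct_mulVec_le _ _ _
    _ = specNorm Z := by rw [← hcol, ← hcol, hU, hV, one_apply_eq, Real.sqrt_one, mul_one, mul_one]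

lemma nucNorm_mul_diagonal_mul_transpose_le (hU : Uᵀ * U = 1) (hV : Vᵀ * V = 1)
    {d : Fin r → ℝ} (hd : ∀ k, 0 ≤ d k) : nucNorm (U * diagonal d * Vᵀ) ≤ ∑ k, d k := by
  obtain ⟨W, hW, hWW, -⟩ := exists_dual_certificate (U * diagonal d * Vᵀ)
  rw [← hW, finner_mul_diagonal_mul_transpose]
  refine Finset.sum_le_sum fun k _ => mul_le_of_le_one_right (hd k) ?_
  exact (transpose_mul_mul_apply_self_le hU hV W k).trans (specNorm_le_one_of_idempotent hWW)

lemma finner_mul_diagonal_mul_transpose_self (hU : Uᵀ * U = 1) (hV : Vᵀ * V = 1)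
    (d : Fin r → ℝ) : finner (U * diagonal d * Vᵀ) (U * Vᵀ) = ∑ k, d k := by
  have h : Uᵀ * (U * Vᵀ) * V = 1 := by rw [← Matrix.mul_assoc, hU, Matrix.one_mul, hV]
  simp [finner_mul_diagonal_mul_transpose, h]

lemma le_nucNorm_mul_diagonal_mul_transpose_add (hU : Uᵀ * U = 1) (hV : Vᵀ * V = 1)
    {d : Fin r → ℝ} (hd : ∀ k, 0 ≤ d k) {PT : Mat n →ₗ[ℝ] Mat n}
    (hPT : IsOrthProj (tangentT U V) PT) (H : Mat n) :
    nucNorm (U * diagonal d * Vᵀ) + finner H (U * Vᵀ) + nucNorm (H - PT H) ≤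
      nucNorm (U * diagonal d * Vᵀ + H) := by
  set L0 := U * diagonal d * Vᵀ
  set B := H - PT H
  obtain ⟨hUB, hBV⟩ : Uᵀ * B = 0 ∧ B * V = 0 := mem_orthComp_tangentT_iff.mp (hPT.2.2 H)
  obtain ⟨W, hBW, hWW, K, hWK⟩ := exists_dual_certificate B
  have hUW : Uᵀ * W = 0 := by
    rw [hWK, ← Matrix.mul_assoc, ← Matrix.mul_assoc, hUB, Matrix.zero_mul, Matrix.zero_mul]
  have hWV : W * V = 0 := by rw [hWK, Matrix.mul_assoc, hBV, Matrix.mul_zero]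
  have hWT : W ∈ orthComp (tangentT U V) := mem_orthComp_tangentT_iff.mpr ⟨hUW, hWV⟩
  have hL0W : finner L0 W = 0 := by
    rw [finner_comm]; exact hWT _ (mul_diagonal_mul_transpose_mem_tangentT d)
  have hHW : finner H W = nucNorm B := by
    rw [← hBW, ← sub_add_cancel H (PT H), finner_add_left, finner_comm (PT H), hWT _ (hPT.1 H),
      add_zero]
  have hdual : finner (L0 + H) (U * Vᵀ + W) ≤ nucNorm (L0 + H) := by
    have h := finner_le_nucNorm_mul_specNorm (L0 + H) (U * Vᵀ + W)
    have hG := specNorm_mul_transpose_add_le_one hU hV hUW hWV hWW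
    nlinarith [nucNorm_nonneg (L0 + H)]
  rw [finner_add_left, finner_add_right, finner_add_right, hL0W, hHW,
    finner_mul_diagonal_mul_transpose_self hU hV] at hdual
  linarith [nucNorm_mul_diagonal_mul_transpose_le hU hV hd]

end LowRank

section Sparse

variable {n : ℕ}

noncomputable def supportProj (S0 : Mat n) : Mat n →ₗ[ℝ] Mat n where
  toFun X := Matrix.of fun i j => if S0 i j = 0 then 0 else X i j
  map_add' X Y := by ext i j; simp only [Matrix.of_apply, Matrix.add_apply]; split_ifs <;> simp
  map_smul' c X := by ext i j; simp only [Matrix.of_apply, Matrix.smul_apply]; split_ifs <;> simp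

lemma supportProj_apply (S0 X : Mat n) (i j : Fin n) :
    supportProj S0 X i j = if S0 i j = 0 then 0 else X i j := rfl

lemma sub_supportProj_apply (S0 X : Mat n) (i j : Fin n) :
    (X - supportProj S0 X) i j = if S0 i j = 0 then X i j else 0 := by
  rw [Matrix.sub_apply, supportProj_apply]; split_ifs <;> simp

lemma isOrthProj_supportProj (S0 : Mat n) : IsOrthProj (suppSub S0) (supportProj S0) := by
  refine ⟨fun X i j h => by simp [supportProj_apply, h], fun X hX => ?_, fun X Y hY => ?_⟩
  · ext i j
    rw [supportProj_apply]
    split_ifs with h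
    · exact (hX i j h).symm
    · rfl
  · refine Finset.sum_eq_zero fun i _ => Finset.sum_eq_zero fun j _ => ?_
    rw [sub_supportProj_apply]
    split_ifs with h
    · rw [hY i j h, mul_zero]
    · rw [zero_mul]

lemma l1Norm_nonneg (X : Mat n) : 0 ≤ l1Norm X :=
  Finset.sum_nonneg fun _ _ => Finset.sum_nonneg fun _ _ => abs_nonneg _

lemma l1Norm_eq_zero {X : Mat n} (h : l1Norm X = 0) : X = 0 := by
  ext i j
  have hi := (Finset.sum_eq_zero_iff_of_nonneg fun i _ =>
    Finset.sum_nonneg fun j _ => abs_nonneg (X i j)).mp h i (Finset.mem_univ i)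
  exact abs_eq_zero.mp
    ((Finset.sum_eq_zero_iff_of_nonneg fun j _ => abs_nonneg _).mp hi j (Finset.mem_univ j))

lemma fnorm_le_l1Norm (X : Mat n) : fnorm X ≤ l1Norm X := by
  have h : finner X X ≤ l1Norm X ^ 2 := by
    have := Finset.sum_sq_le_sq_sum_of_nonneg (s := Finset.univ ×ˢ Finset.univ)
      (f := fun p : Fin n × Fin n => |X p.1 p.2|) fun _ _ => abs_nonneg _
    simpa only [Finset.sum_product, abs_mul_abs_self, finner, l1Norm, sq] using this
  exact Real.sqrt_le_iff.mpr ⟨l1Norm_nonneg X, h⟩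

lemma abs_le_linfNorm (F : Mat n) (i j : Fin n) : |F i j| ≤ linfNorm F :=
  le_ciSup (f := fun p : Fin n × Fin n => |F p.1 p.2|) (Set.finite_range _).bddAbove (i, j)

lemma finner_le_linfNorm_mul_l1Norm (F H : Mat n) : finner F H ≤ linfNorm F * l1Norm H := by
  simp only [finner, l1Norm, Finset.mul_sum]
  refine Finset.sum_le_sum fun i _ => Finset.sum_le_sum fun j _ => ?_
  calc F i j * H i j ≤ |F i j| * |H i j| := (le_abs_self _).trans (abs_mul _ _).le
    _ ≤ linfNorm F * |H i j| := mul_le_mul_of_nonneg_right (abs_le_linfNorm F i j) (abs_nonneg _)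

lemma abs_add_sign_mul_le (a h : ℝ) :
    |a| + Real.sign a * h + (if a = 0 then |h| else 0) ≤ |a + h| := by
  rcases lt_trichotomy a 0 with ha | rfl | ha
  · rw [Real.sign_of_neg ha, if_neg ha.ne, abs_of_neg ha]
    linarith [neg_le_abs (a + h)]
  · simp
  · rw [Real.sign_of_pos ha, if_neg ha.ne', abs_of_pos ha]
    linarith [le_abs_self (a + h)]

lemma le_l1Norm_add (S0 H : Mat n) :
    l1Norm S0 + finner (sgnMat S0) H + l1Norm (H - supportProj S0 H) ≤ l1Norm (S0 + H) := by
  simp only [l1Norm, finner, ← Finset.sum_add_distrib]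
  refine Finset.sum_le_sum fun i _ => Finset.sum_le_sum fun j _ => ?_
  have h := abs_add_sign_mul_le (S0 i j) (H i j)
  rw [sub_supportProj_apply, sgnMat, Matrix.of_apply, Matrix.add_apply]
  split_ifs at h ⊢ <;> simpa using h

end Sparse

section Coupling

variable {n : ℕ}

lemma fnorm_apply_le_opNorm_mul {A : Mat n →ₗ[ℝ] Mat n} {C : ℝ}
    (hA : ∀ Y, fnorm (A Y) ≤ C * fnorm Y) (X : Mat n) : fnorm (A X) ≤ opNorm A * fnorm X := by
  rcases eq_or_ne X 0 with rfl | hX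
  · simp [fnorm_eq_norm]
  have hc : 0 < fnorm X := (fnorm_nonneg X).lt_of_ne' (mt fnorm_eq_zero.mp hX)
  have hunit : fnorm ((fnorm X)⁻¹ • X) = 1 := by
    rw [fnorm_smul, abs_of_pos (inv_pos.mpr hc), inv_mul_cancel₀ hc.ne']
  have hle : fnorm (A ((fnorm X)⁻¹ • X)) ≤ opNorm A := by
    refine le_csSup ⟨C, ?_⟩ ⟨_, hunit, rfl⟩
    rintro _ ⟨Y, hY, rfl⟩
    simpa [hY] using hA Y
  rw [map_smul, fnorm_smul, abs_of_pos (inv_pos.mpr hc), inv_mul_le_iff₀ hc] at hle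
  linarith

lemma fnorm_apply_le_of_opNorm_comp_le {Ω Γ : Submodule ℝ (Mat n)} {P R : Mat n →ₗ[ℝ] Mat n}
    (hP : IsOrthProj Ω P) (hR : IsOrthProj Γ R) (hPR : opNorm (P ∘ₗ R) ≤ 1 / 2)
    {X Y : Mat n} (hXY : X + Y ∈ Γ) : fnorm (P X) ≤ fnorm (X - P X) + 2 * fnorm Y := by
  have hsplit : P X = (P ∘ₗ R) X - P (Y - R Y) := by
    have hfix := hR.2.1 _ hXY
    rw [map_add] at hfix
    rw [LinearMap.comp_apply, ← map_sub]
    congr 1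
    calc X = R X + R Y - Y := eq_sub_of_add_eq hfix.symm
      _ = R X - (Y - R Y) := by abel
  have hPR' : fnorm ((P ∘ₗ R) X) ≤ 1 / 2 * fnorm X :=
    (fnorm_apply_le_opNorm_mul (C := 1)
      (fun Z => by simpa using (hP.fnorm_apply_le (R Z)).trans (hR.fnorm_apply_le Z)) X).trans
      (mul_le_mul_of_nonneg_right hPR (fnorm_nonneg X))
  have hY : fnorm (P (Y - R Y)) ≤ fnorm Y := (hP.fnorm_apply_le _).trans (hR.fnorm_sub_apply_le Y)
  have hX : fnorm X ≤ fnorm (P X) + fnorm (X - P X) := by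
    simpa using fnorm_add_le (P X) (X - P X)
  have h := fnorm_sub_le ((P ∘ₗ R) X) (P (Y - R Y))
  rw [← hsplit] at h
  linarith

lemma eq_zero_of_finrank_sup_eq_add {A B C : Submodule ℝ (Mat n)}
    (hdim : Module.finrank ℝ ↥(A ⊔ B ⊔ C) =
      Module.finrank ℝ ↥A + Module.finrank ℝ ↥B + Module.finrank ℝ ↥C)
    {a b c : Mat n} (ha : a ∈ A) (hb : b ∈ B) (hc : c ∈ C) (h : a + b + c = 0) :
    b = 0 ∧ c = 0 := by
  have hAB := Submodule.finrank_sup_add_finrank_inf_eq A B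
  have hABC := Submodule.finrank_sup_add_finrank_inf_eq (A ⊔ B) C
  have hc0 : c = 0 := by
    have hinf : (A ⊔ B) ⊓ C = ⊥ := Submodule.finrank_eq_zero.mp (by omega)
    have hmem : c ∈ (A ⊔ B) ⊓ C :=
      ⟨by rw [eq_neg_of_add_eq_zero_right h]; exact neg_mem (Submodule.add_mem_sup ha hb), hc⟩
    simpa [hinf] using hmem
  have hinf : A ⊓ B = ⊥ := Submodule.finrank_eq_zero.mp (by omega)
  rw [hc0, add_zero] at h
  have hmem : b ∈ A ⊓ B := ⟨by rw [eq_neg_of_add_eq_zero_right h]; exact neg_mem ha, hb⟩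
  exact ⟨by simpa [hinf] using hmem, hc0⟩

end Coupling

open Matrix in
theorem objective_gap_ge {n r : ℕ} {U V : Matrix (Fin n) (Fin r) ℝ} {d : Fin r → ℝ}
    (hU : Uᵀ * U = 1) (hV : Vᵀ * V = 1) (hd : ∀ i, 0 ≤ d i)
    {S0 : Mat n} {Q : Submodule ℝ (Mat n)} {lam : ℝ} (hlam : 0 ≤ lam)
    {PT PΓperp : Mat n →ₗ[ℝ] Mat n} (hPT : IsOrthProj (tangentT U V) PT)
    (hPΓperp : IsOrthProj (orthComp (Q ⊓ orthComp (tangentT U V))) PΓperp)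
    (hop : opNorm (supportProj S0 ∘ₗ PΓperp) ≤ 1 / 2) {W F D : Mat n}
    (heq : U * Vᵀ + W = lam • (sgnMat S0 + F + supportProj S0 D)) (hmemQ : U * Vᵀ + W ∈ Q)
    (hW1 : PT W = 0) (hW2 : specNorm W ≤ 1 / 2)
    (hF1 : supportProj S0 F = 0) (hF2 : linfNorm F ≤ 1 / 2)
    (hD : fnorm (supportProj S0 D) ≤ 1 / 4)
    {HL HS : Mat n} (hH : HL + HS ∈ orthComp Q) :
    (1 - lam) / 2 * nucNorm (HL - PT HL) + lam / 4 * l1Norm (HS - supportProj S0 HS) ≤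
      nucNorm (U * diagonal d * Vᵀ + HL) + lam * l1Norm (S0 + HS) -
        (nucNorm (U * diagonal d * Vᵀ) + lam * l1Norm S0) := by
  set Ω := supportProj S0
  set B := HL - PT HL
  set C := HS - Ω HS
  have hΩ := isOrthProj_supportProj S0
  have hnuc := le_nucNorm_mul_diagonal_mul_transpose_add hU hV hd hPT HL
  have hl1 := le_l1Norm_add S0 HS
  have hpair : finner HL (U * Vᵀ) + finner HL W +
      lam * (finner (sgnMat S0) HS + finner HS F + finner HS (Ω D)) = 0 := by
    have h := hH _ hmemQ
    rw [finner_add_left, finner_add_right, heq, finner_smul_right, finner_add_right,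
      finner_add_right, finner_comm HS] at h
    linarith
  have hW : finner HL W ≤ 1 / 2 * nucNorm B := by
    have hPTW : finner (PT HL) W = 0 := by rw [hPT.finner_apply_comm, hW1, finner_zero_right]
    calc finner HL W = finner B W := by rw [finner_sub_left, hPTW, sub_zero]
      _ ≤ nucNorm B * specNorm W := finner_le_nucNorm_mul_specNorm B W
      _ ≤ 1 / 2 * nucNorm B := by nlinarith [nucNorm_nonneg B]
  have hF : finner HS F ≤ 1 / 2 * l1Norm C := by
    have hΩF : finner (Ω HS) F = 0 := by rw [hΩ.finner_apply_comm, hF1, finner_zero_right]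
    calc finner HS F = finner F C := by rw [finner_comm F, finner_sub_left, hΩF, sub_zero]
      _ ≤ linfNorm F * l1Norm C := finner_le_linfNorm_mul_l1Norm F C
      _ ≤ 1 / 2 * l1Norm C := by nlinarith [l1Norm_nonneg C]
  have hDΩ : finner HS (Ω D) ≤ 1 / 4 * fnorm (Ω HS) := by
    calc finner HS (Ω D) = finner (Ω D) (Ω HS) := by rw [finner_comm, hΩ.finner_apply_left]
      _ ≤ fnorm (Ω D) * fnorm (Ω HS) := finner_le_fnorm_mul_fnorm _ _
      _ ≤ 1 / 4 * fnorm (Ω HS) := by nlinarith [fnorm_nonneg (Ω HS)]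
  have hΩHS : fnorm (Ω HS) ≤ l1Norm C + 2 * nucNorm B := by
    have hmem : HS + B ∈ orthComp (Q ⊓ orthComp (tangentT U V)) := by
      intro Z hZ
      have h1 := hH Z hZ.1
      have h2 := hZ.2 _ (hPT.1 HL)
      rw [finner_comm] at h2
      rw [show HS + B = HL + HS - PT HL by simp only [B]; abel, finner_sub_left, h1, h2,
        sub_zero]
    have h := fnorm_apply_le_of_opNorm_comp_le hΩ hPΓperp hop hmem
    linarith [fnorm_le_l1Norm C, fnorm_le_nucNorm B]
  have p1 := mul_le_mul_of_nonneg_left hF hlam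
  have p2 := mul_le_mul_of_nonneg_left hDΩ hlam
  have p3 := mul_le_mul_of_nonneg_left hΩHS hlam
  have p4 := mul_le_mul_of_nonneg_left hl1 hlam
  linarith

theorem statement1_general {n r : ℕ}
    (L0 S0 M : Mat n) (U V : Matrix (Fin n) (Fin r) ℝ) (d : Fin r → ℝ)
    (hU : Uᵀ * U = 1) (hV : Vᵀ * V = 1) (hd : ∀ i, 0 < d i)
    (hL0 : L0 = U * Matrix.diagonal d * Vᵀ)
    (hM : M = L0 + S0)
    (Q : Submodule ℝ (Mat n)) (lam : ℝ) (hlam0 : 0 < lam) (hlam1 : lam < 1)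
    (PQ PT PΩ PΓperp : Mat n →ₗ[ℝ] Mat n)
    (hPQ : IsOrthProj Q PQ)
    (hPT : IsOrthProj (tangentT U V) PT)
    (hPΩ : IsOrthProj (suppSub S0) PΩ)
    (hPΓperp : IsOrthProj (orthComp (Q ⊓ orthComp (tangentT U V))) PΓperp)
    (hdim : Module.finrank ℝ ↥(orthComp Q ⊔ tangentT U V ⊔ suppSub S0) =
      Module.finrank ℝ ↥(orthComp Q) + Module.finrank ℝ ↥(tangentT U V) +
        Module.finrank ℝ ↥(suppSub S0))
    (hop : opNorm (PΩ ∘ₗ PΓperp) < 1 / 2)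
    (W F D : Mat n)
    (heq : U * Vᵀ + W = lam • (sgnMat S0 + F + PΩ D))
    (hmemQ : U * Vᵀ + W ∈ Q)
    (hW1 : PT W = 0) (hW2 : specNorm W < 1 / 2)
    (hF1 : PΩ F = 0) (hF2 : linfNorm F < 1 / 2)
    (hD : fnorm (PΩ D) ≤ 1 / 4) :
    (∀ L S : Mat n, PQ (L + S) = PQ M →
      nucNorm L0 + lam * l1Norm S0 ≤ nucNorm L + lam * l1Norm S) ∧
    (∀ L S : Mat n, PQ (L + S) = PQ M →
      nucNorm L + lam * l1Norm S = nucNorm L0 + lam * l1Norm S0 →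
      L = L0 ∧ S = S0) := by
  obtain rfl := hPΩ.unique (isOrthProj_supportProj S0)
  have hperp : ∀ L S : Mat n, PQ (L + S) = PQ M → (L - L0) + (S - S0) ∈ orthComp Q :=
    fun L S hLS => hPQ.mem_orthComp_of_apply_eq_zero <| by
      rw [show (L - L0) + (S - S0) = (L + S) - M by rw [hM]; abel, map_sub, hLS, sub_self]
  have hgap : ∀ L S : Mat n, PQ (L + S) = PQ M →
      (1 - lam) / 2 * nucNorm ((L - L0) - PT (L - L0)) +
          lam / 4 * l1Norm ((S - S0) - supportProj S0 (S - S0)) ≤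
        nucNorm L + lam * l1Norm S - (nucNorm L0 + lam * l1Norm S0) := fun L S hLS => by
    simpa only [hL0, add_sub_cancel] using objective_gap_ge hU hV (fun i => (hd i).le) hlam0.le hPT hPΓperp hop.le
      heq hmemQ hW1 hW2.le hF1 hF2.le hD (hperp L S hLS)
  have hB := fun L => nucNorm_nonneg ((L - L0) - PT (L - L0))
  have hC := fun S => l1Norm_nonneg ((S - S0) - supportProj S0 (S - S0))
  refine ⟨fun L S hLS => ?_, fun L S hLS hcost => ?_⟩
  · nlinarith [hgap L S hLS, hB L, hC S]
  · have hgap := hgap L S hLS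
    have hB0 : nucNorm ((L - L0) - PT (L - L0)) = 0 := by nlinarith [hB L, hC S]
    have hC0 : l1Norm ((S - S0) - supportProj S0 (S - S0)) = 0 := by nlinarith [hB L, hC S]
    have hLT := hPT.mem_of_sub_apply_eq_zero (eq_zero_of_nucNorm_eq_zero hB0)
    have hSΩ := (isOrthProj_supportProj S0).mem_of_sub_apply_eq_zero (l1Norm_eq_zero hC0)
    obtain ⟨hL, hS⟩ := eq_zero_of_finrank_sup_eq_add hdim (neg_mem (hperp L S hLS)) hLT hSΩ
      (by abel)
    exact ⟨sub_eq_zero.mp hL, sub_eq_zero.mp hS⟩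

/-- Principal component pursuit with reduced linear measurements
(Lemma 1 of the paper): under the dual-certificate conditions, `(L₀, S₀)` is the unique
minimizer of `‖L‖₊ + λ‖S‖₁` subject to `P_Q M = P_Q (L + S)`. -/
theorem statement1 {n r : ℕ} (hn : 1 ≤ n)
    (L0 S0 M : Mat n) (U V : Matrix (Fin n) (Fin r) ℝ) (d : Fin r → ℝ)
    (hU : Uᵀ * U = 1) (hV : Vᵀ * V = 1) (hd : ∀ i, 0 < d i)
    (hL0 : L0 = U * Matrix.diagonal d * Vᵀ)
    (hM : M = L0 + S0)
    (Q : Submodule ℝ (Mat n)) (lam : ℝ) (hlam0 : 0 < lam) (hlam1 : lam < 1)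
    (PQ PT PΩ PΓperp : Mat n →ₗ[ℝ] Mat n)
    (hPQ : IsOrthProj Q PQ)
    (hPT : IsOrthProj (tangentT U V) PT)
    (hPΩ : IsOrthProj (suppSub S0) PΩ)
    (hPΓperp : IsOrthProj (orthComp (Q ⊓ orthComp (tangentT U V))) PΓperp)
    (hdim : Module.finrank ℝ ↥(orthComp Q ⊔ tangentT U V ⊔ suppSub S0) =
      Module.finrank ℝ ↥(orthComp Q) + Module.finrank ℝ ↥(tangentT U V) +
        Module.finrank ℝ ↥(suppSub S0))
    (hop : opNorm (PΩ ∘ₗ PΓperp) < 1 / 2)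
    (W F D : Mat n)
    (heq : U * Vᵀ + W = lam • (sgnMat S0 + F + PΩ D))
    (hmemQ : U * Vᵀ + W ∈ Q)
    (hW1 : PT W = 0) (hW2 : specNorm W < 1 / 2)
    (hF1 : PΩ F = 0) (hF2 : linfNorm F < 1 / 2)
    (hD : fnorm (PΩ D) ≤ 1 / 4) :
    (∀ L S : Mat n, PQ (L + S) = PQ M →
      nucNorm L0 + lam * l1Norm S0 ≤ nucNorm L + lam * l1Norm S) ∧
    (∀ L S : Mat n, PQ (L + S) = PQ M →
      nucNorm L + lam * l1Norm S = nucNorm L0 + lam * l1Norm S0 →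
      L = L0 ∧ S = S0) :=
  statement1_general L0 S0 M U V d hU hV hd hL0 hM Q lam hlam0 hlam1 PQ PT PΩ PΓperp hPQ hPT hPΩ
    hPΓperp hdim hop W F D heq hmemQ hW1 hW2 hF1 hF2 hD
end

section
/- Let V and W be linear subspaces of a finite-dimensional real inner product space with a := ‖P_V P_W‖ < 1, and let B ∈ V. Then the matrix X* := P_{W^⊥} Σ_{k≥0} (P_V P_W P_V)^k B satisfies P_V X* = B and P_W X* = 0, and ‖X*‖ ≤ ‖B‖/(1 − a²), where ‖·‖ on vectors is the norm induced by the inner product. -/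
/-!
Write `T := P_V P_W P_V`. Since `T = (P_V P_W)(P_V P_W)*`, the C*-identity gives `‖T‖ = a²`, so
the Neumann series `S := Σ Tᵏ B` converges, with `‖S‖ ≤ ‖B‖ / (1 - a²)`, and satisfies
`S = B + T S`. In particular `S ∈ V`, hence `P_V P_{W^⊥} S = S - P_V P_W P_V S = S - T S = B`;
finally `P_W` kills the range of `P_{W^⊥}`, and `P_{W^⊥}` does not increase norms.
-/

/-- The orthogonal projection onto a subspace `V`, viewed as a continuous linear
endomorphism of the ambient space. -/
noncomputable def projCLM {E : Type*} [NormedAddCommGroup E] [InnerProductSpace ℝ E]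
    [FiniteDimensional ℝ E] (V : Submodule ℝ E) : E →L[ℝ] E :=
  V.subtypeL.comp (Submodule.orthogonalProjection V)

open ContinuousLinearMap

lemma projCLM_eq_starProjection {E : Type*} [NormedAddCommGroup E] [InnerProductSpace ℝ E]
    [FiniteDimensional ℝ E] (V : Submodule ℝ E) : projCLM V = V.starProjection :=
  rfl

section NeumannSeries

variable {𝕜 E : Type*} [NontriviallyNormedField 𝕜] [NormedAddCommGroup E] [NormedSpace 𝕜 E]
  {T : E →L[𝕜] E} {r : ℝ}

lemma norm_pow_apply_le (hT : ‖T‖ ≤ r) (x : E) (k : ℕ) : ‖(T ^ k) x‖ ≤ r ^ k * ‖x‖ := by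
  induction k with
  | zero => simp
  | succ k ih =>
    calc ‖(T ^ (k + 1)) x‖ = ‖T ((T ^ k) x)‖ := by rw [pow_succ', mul_apply_eq_comp]
      _ ≤ ‖T‖ * ‖(T ^ k) x‖ := T.le_opNorm _
      _ ≤ r * (r ^ k * ‖x‖) := mul_le_mul hT ih (norm_nonneg _) ((norm_nonneg T).trans hT)
      _ = r ^ (k + 1) * ‖x‖ := by ring

lemma summable_norm_pow_apply (hT : ‖T‖ ≤ r) (hr : r < 1) (x : E) :
    Summable fun k ↦ ‖(T ^ k) x‖ :=
  ((summable_geometric_of_lt_one ((norm_nonneg T).trans hT) hr).mul_right ‖x‖).of_nonneg_of_le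
    (fun _ ↦ norm_nonneg _) (norm_pow_apply_le hT x)

lemma summable_pow_apply [CompleteSpace E] (hT : ‖T‖ ≤ r) (hr : r < 1) (x : E) :
    Summable fun k ↦ (T ^ k) x :=
  (summable_norm_pow_apply hT hr x).of_norm

lemma norm_tsum_pow_apply_le (hT : ‖T‖ ≤ r) (hr : r < 1) (x : E) :
    ‖∑' k, (T ^ k) x‖ ≤ ‖x‖ / (1 - r) := by
  have hr₀ : 0 ≤ r := (norm_nonneg T).trans hT
  calc ‖∑' k, (T ^ k) x‖ ≤ ∑' k, ‖(T ^ k) x‖ :=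
        norm_tsum_le_tsum_norm (summable_norm_pow_apply hT hr x)
    _ ≤ ∑' k, r ^ k * ‖x‖ :=
        (summable_norm_pow_apply hT hr x).tsum_le_tsum (norm_pow_apply_le hT x)
          ((summable_geometric_of_lt_one hr₀ hr).mul_right ‖x‖)
    _ = ‖x‖ / (1 - r) := by
        rw [tsum_mul_right, tsum_geometric_of_lt_one hr₀ hr, div_eq_inv_mul]

lemma tsum_pow_apply_eq_add {x : E} (h : Summable fun k ↦ (T ^ k) x) :
    ∑' k, (T ^ k) x = x + T (∑' k, (T ^ k) x) := by
  rw [T.map_tsum h, h.tsum_eq_zero_add]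
  simp only [pow_zero, one_apply_eq_self, pow_succ', mul_apply_eq_comp]

end NeumannSeries

namespace Submodule

variable {𝕜 E : Type*} [RCLike 𝕜] [NormedAddCommGroup E] [InnerProductSpace 𝕜 E]
  (V W : Submodule 𝕜 E) [V.HasOrthogonalProjection] [W.HasOrthogonalProjection]

lemma norm_starProjection_comp_comp_self [CompleteSpace E] :
    ‖V.starProjection ∘L W.starProjection ∘L V.starProjection‖ =
      ‖V.starProjection ∘L W.starProjection‖ ^ 2 := by
  have hfactor : V.starProjection ∘L W.starProjection ∘L V.starProjection =
      (V.starProjection * W.starProjection) * star (V.starProjection * W.starProjection) := by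
    rw [star_mul, (isSelfAdjoint_starProjection V).star_eq,
      (isSelfAdjoint_starProjection W).star_eq, mul_assoc, ← mul_assoc W.starProjection,
      W.isIdempotentElem_starProjection.eq]
    rfl
  rw [hfactor, sq]
  exact CStarRing.norm_self_mul_star

lemma starProjection_starProjection_orthogonal_eq {B S : E} (hB : B ∈ V)
    (hS : S = B + (V.starProjection ∘L W.starProjection ∘L V.starProjection) S) :
    V.starProjection (Wᗮ.starProjection S) = B := by
  have hSV : V.starProjection S = S := by
    rw [starProjection_eq_self_iff, hS]
    exact V.add_mem hB (V.starProjection_apply_mem _)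
  calc V.starProjection (Wᗮ.starProjection S)
      = S - (V.starProjection ∘L W.starProjection ∘L V.starProjection) S := by
        rw [starProjection_orthogonal, sub_apply, id_apply, map_sub, comp_apply, comp_apply, hSV]
    _ = B := by rw [sub_eq_iff_eq_add, ← hS]

end Submodule

/-- If `a := ‖P_V P_W‖ < 1` and `B ∈ V`, then
`X* := P_{W^⊥} Σ_{k ≥ 0} (P_V P_W P_V)^k B` satisfies `P_V X* = B`, `P_W X* = 0`, and
`‖X*‖ ≤ ‖B‖ / (1 − a²)`. -/
theorem statement6 {E : Type*} [NormedAddCommGroup E] [InnerProductSpace ℝ E]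
    [FiniteDimensional ℝ E] (V W : Submodule ℝ E) (a : ℝ)
    (ha : ‖(projCLM V).comp (projCLM W)‖ = a) (ha1 : a < 1)
    (B : E) (hB : B ∈ V) :
    projCLM V (projCLM Wᗮ
        (∑' k : ℕ, (((projCLM V).comp ((projCLM W).comp (projCLM V))) ^ k) B)) = B ∧
    projCLM W (projCLM Wᗮ
        (∑' k : ℕ, (((projCLM V).comp ((projCLM W).comp (projCLM V))) ^ k) B)) = 0 ∧
    ‖projCLM Wᗮ (∑' k : ℕ, (((projCLM V).comp ((projCLM W).comp (projCLM V))) ^ k) B)‖ ≤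
      ‖B‖ / (1 - a ^ 2) := by
  simp only [projCLM_eq_starProjection] at ha ⊢
  have hT : ‖V.starProjection ∘L W.starProjection ∘L V.starProjection‖ ≤ a ^ 2 :=
    (V.norm_starProjection_comp_comp_self W).trans_le (by rw [ha])
  have ha2 : a ^ 2 < 1 := pow_lt_one₀ (ha ▸ norm_nonneg _) ha1 two_ne_zero
  exact ⟨V.starProjection_starProjection_orthogonal_eq W hB
      (tsum_pow_apply_eq_add (summable_pow_apply hT ha2 B)),
    W.starProjection_apply_eq_zero_iff.2 (Wᗮ.starProjection_apply_mem _),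
    (Wᗮ.norm_starProjection_apply_le _).trans (norm_tsum_pow_apply_le hT ha2 B)⟩
end
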